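/- The ℓ-th derivative in ρ of f(ρ,θ) = e^{−(ħρ + 1/ħ − 2ρ^{1/2} cos θ)} evaluated at ρ = ħ^{−2} equals ħ^ℓ q_ℓ(cos θ) e^{−(2/ħ)(1−cos θ)}, where q_ℓ is a monic polynomial of degree ℓ (with coefficients depending polynomially on ħ) satisfying q_ℓ(0) = (−1)^ℓ; in particular for ℓ = 1, ∂_ρ f(ρ,θ)|_{ρ=ħ^{−2}} = ħ(cos θ − 1) e^{−(2/ħ)(1−cos θ)}. -/

import Mathlib

open Real

theorem hasDerivAt_exp_neg_affine_sub_sqrt (a b c : ℝ) {x : ℝ} (hx : x ≠ 0) :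
    HasDerivAt (fun ρ : ℝ => exp (-(a * ρ + b - c * √ρ)))
      ((c / (2 * √x) - a) * exp (-(a * x + b - c * √x))) x := by
  have hexponent : HasDerivAt (fun ρ : ℝ => -(a * ρ + b - c * √ρ)) (c / (2 * √x) - a) x := by
    refine ((((hasDerivAt_id x).const_mul a).add_const b).sub
      ((hasDerivAt_sqrt hx).const_mul c)).neg.congr_deriv ?_
    ring
  simpa only [mul_comm] using hexponent.exp

theorem sqrt_inv_sq {h : ℝ} (hh : 0 ≤ h) : √((h ^ 2)⁻¹) = h⁻¹ := by
  rw [sqrt_inv, sqrt_sq hh]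

/-- The case `ℓ = 1`: the derivative in `ρ` of `f(ρ,θ) = e^{−(ħρ + 1/ħ − 2√ρ cos θ)}`
evaluated at `ρ = λ = ħ⁻²` equals `ħ(cos θ − 1) e^{−(2/ħ)(1−cos θ)}`, in accordance with the
general formula `∂_ρ^ℓ f(ρ,θ)|_{ρ=ħ⁻²} = ħ^ℓ q_ℓ(cos θ) e^{−(2/ħ)(1−cos θ)}` with
`q₁(x) = x − 1` monic of degree `1` and `q₁(0) = −1`. -/
theorem gaussian_overlap_derivative_at_lambda
    (hbar : ℝ) (hpos : 0 < hbar) (θ : ℝ) :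
    HasDerivAt
      (fun ρ : ℝ => Real.exp (-(hbar * ρ + 1 / hbar - 2 * Real.sqrt ρ * Real.cos θ)))
      (hbar * (Real.cos θ - 1) * Real.exp (-(2 / hbar) * (1 - Real.cos θ)))
      ((hbar ^ 2)⁻¹) := by
  have hderiv := hasDerivAt_exp_neg_affine_sub_sqrt hbar (1 / hbar) (2 * cos θ)
    (inv_ne_zero (pow_ne_zero 2 hpos.ne'))
  rw [sqrt_inv_sq hpos.le] at hderiv
  convert hderiv using 1
  · funext ρ
    ring_nf
  · have hexponent : -(hbar * (hbar ^ 2)⁻¹ + 1 / hbar - 2 * cos θ * hbar⁻¹)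
        = -(2 / hbar) * (1 - cos θ) := by
      field_simp
      ring
    rw [hexponent]
    field_simp
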